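/- arXiv:2310.17904 — 4 statements merged into one kernel-verified Lean document; each statement's English description precedes it below -/
import Mathlib

section
/- Let G and G' be finite simple graphs with nonempty vertex sets. Then ft(G) · ft(G') ≤ ft(G □ G'). -/
open Finset

/-- A fort of a graph: a nonempty (finite) set of vertices `F` such that no vertex
outside `F` has exactly one neighbor in `F`. -/
def IsFort {V : Type*} (G : SimpleGraph V) (F : Finset V) : Prop :=
  F.Nonempty ∧ ∀ v ∉ F, ¬ ∃! u, u ∈ F ∧ G.Adj v u

/-- The fort number: the maximum cardinality of a collection of pairwise disjoint forts. -/
noncomputable def fortNumber {V : Type*} (G : SimpleGraph V) : ℕ :=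
  sSup {k | ∃ 𝒞 : Finset (Finset V), (∀ F ∈ 𝒞, IsFort G F) ∧
    (↑𝒞 : Set (Finset V)).Pairwise Disjoint ∧ 𝒞.card = k}

/-- The fractional zero forcing number. -/
noncomputable def fracZ {V : Type*} [Fintype V] (G : SimpleGraph V) : ℝ :=
  sInf {x : ℝ | ∃ ω : V → ℝ, (∀ v, 0 ≤ ω v) ∧
    (∀ F : Finset V, IsFort G F → 1 ≤ ∑ v ∈ F, ω v) ∧ x = ∑ v, ω v}

/-- The set of vertices eventually filled by the zero forcing process started at `S`. -/
inductive ZFForced {V : Type*} (G : SimpleGraph V) (S : Set V) : V → Prop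
  | init (v : V) : v ∈ S → ZFForced G S v
  | force (u w : V) : G.Adj u w → ZFForced G S u →
      (∀ x, G.Adj u x → x ≠ w → ZFForced G S x) → ZFForced G S w

/-- A zero forcing set: starting from `S`, every vertex is eventually filled. -/
def IsZeroForcingSet {V : Type*} (G : SimpleGraph V) (S : Set V) : Prop :=
  ∀ v, ZFForced G S v

/-- The zero forcing number: minimum cardinality of a zero forcing set. -/
noncomputable def zfNumber {V : Type*} (G : SimpleGraph V) : ℕ :=
  sInf {k | ∃ S : Finset V, IsZeroForcingSet G ↑S ∧ S.card = k}


lemma isFort_prod {V V' : Type*} {G : SimpleGraph V} {G' : SimpleGraph V'}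
    {F : Finset V} {F' : Finset V'} (hF : IsFort G F) (hF' : IsFort G' F') :
    IsFort (G □ G') (F ×ˢ F') := by
  obtain ⟨hne, hfort⟩ := hF
  obtain ⟨hne', hfort'⟩ := hF'
  refine ⟨hne.product hne', ?_⟩
  rintro ⟨a, b⟩ hv ⟨⟨w1, w2⟩, ⟨hwmem, hwadj⟩, huniq⟩
  simp only [Finset.mem_product] at hv hwmem
  rw [SimpleGraph.boxProd_adj] at hwadj
  dsimp only at hwadj
  by_cases ha : a ∈ F
  · have hb : b ∉ F' := fun hb => hv ⟨ha, hb⟩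
    rcases hwadj with ⟨_, h2⟩ | ⟨hadj, h1⟩
    · exact hb (h2 ▸ hwmem.2)
    · refine hfort' b hb ⟨w2, ⟨hwmem.2, hadj⟩, ?_⟩
      intro u' ⟨hu'F, hu'adj⟩
      have h := huniq (a, u') ⟨Finset.mem_product.mpr ⟨ha, hu'F⟩,
        SimpleGraph.boxProd_adj.mpr (Or.inr ⟨hu'adj, rfl⟩)⟩
      exact congrArg Prod.snd h
  · rcases hwadj with ⟨hadj, h2⟩ | ⟨_, h1⟩
    · have hb : b ∈ F' := h2 ▸ hwmem.2
      refine hfort a ha ⟨w1, ⟨hwmem.1, hadj⟩, ?_⟩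
      intro u ⟨huF, huadj⟩
      have h := huniq (u, b) ⟨Finset.mem_product.mpr ⟨huF, hb⟩,
        SimpleGraph.boxProd_adj.mpr (Or.inl ⟨huadj, rfl⟩)⟩
      exact congrArg Prod.fst h
    · exact ha (h1 ▸ hwmem.1)

lemma fortSet_bdd {V : Type*} [Fintype V] (G : SimpleGraph V) :
    BddAbove {k | ∃ 𝒞 : Finset (Finset V), (∀ F ∈ 𝒞, IsFort G F) ∧
      (↑𝒞 : Set (Finset V)).Pairwise Disjoint ∧ 𝒞.card = k} := by
  refine ⟨Fintype.card (Finset V), ?_⟩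
  rintro k ⟨𝒞, _, _, rfl⟩
  exact Finset.card_le_univ 𝒞

lemma fortSet_nonempty {V : Type*} (G : SimpleGraph V) :
    Set.Nonempty {k | ∃ 𝒞 : Finset (Finset V), (∀ F ∈ 𝒞, IsFort G F) ∧
      (↑𝒞 : Set (Finset V)).Pairwise Disjoint ∧ 𝒞.card = k} :=
  ⟨0, ∅, by simp, by simp, rfl⟩

lemma exists_fort_collection {V : Type*} [Fintype V] (G : SimpleGraph V) :
    ∃ 𝒞 : Finset (Finset V), (∀ F ∈ 𝒞, IsFort G F) ∧
      (↑𝒞 : Set (Finset V)).Pairwise Disjoint ∧ 𝒞.card = fortNumber G :=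
  Nat.sSup_mem (fortSet_nonempty G) (fortSet_bdd G)

/-- `ft(G) · ft(G') ≤ ft(G □ G')`. -/
theorem fortNumber_mul_le_fortNumber_boxProd {V V' : Type*} [Fintype V] [Fintype V']
    [Nonempty V] [Nonempty V'] (G : SimpleGraph V) (G' : SimpleGraph V') :
    fortNumber G * fortNumber G' ≤ fortNumber (G □ G') := by
  classical
  obtain ⟨𝒞, h1, h2, hc⟩ := exists_fort_collection G
  obtain ⟨𝒞', h1', h2', hc'⟩ := exists_fort_collection G'
  set D : Finset (Finset (V × V')) := (𝒞 ×ˢ 𝒞').image (fun p => p.1 ×ˢ p.2) with hD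
  have hinj : Set.InjOn (fun p : Finset V × Finset V' => p.1 ×ˢ p.2) ↑(𝒞 ×ˢ 𝒞') := by
    rintro ⟨F1, F1'⟩ hm1 ⟨F2, F2'⟩ hm2 heq
    simp only [Finset.coe_product, Set.mem_prod, Finset.mem_coe] at hm1 hm2
    have hne1 := (h1 _ hm1.1).1
    have hne1' := (h1' _ hm1.2).1
    have hne2 := (h1 _ hm2.1).1
    have hne2' := (h1' _ hm2.2).1
    simp only at heq
    have hmem : ∀ a b, (a, b) ∈ F1 ×ˢ F1' ↔ (a, b) ∈ F2 ×ˢ F2' := fun a b => by rw [heq]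
    ext1
    · ext a
      obtain ⟨b, hb⟩ := hne1'
      obtain ⟨b2, hb2⟩ := hne2'
      constructor
      · intro haF
        exact (Finset.mem_product.mp ((hmem a b).mp (Finset.mem_product.mpr ⟨haF, hb⟩))).1
      · intro haF
        exact (Finset.mem_product.mp ((hmem a b2).mpr (Finset.mem_product.mpr ⟨haF, hb2⟩))).1
    · ext b
      obtain ⟨a, ha⟩ := hne1
      obtain ⟨a2, ha2⟩ := hne2
      constructor
      · intro hbF
        exact (Finset.mem_product.mp ((hmem a b).mp (Finset.mem_product.mpr ⟨ha, hbF⟩))).2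
      · intro hbF
        exact (Finset.mem_product.mp ((hmem a2 b).mpr (Finset.mem_product.mpr ⟨ha2, hbF⟩))).2
  have hcard : D.card = fortNumber G * fortNumber G' := by
    rw [hD, Finset.card_image_of_injOn hinj, Finset.card_product, hc, hc']
  have hforts : ∀ F ∈ D, IsFort (G □ G') F := by
    intro F hF
    simp only [hD, Finset.mem_image, Finset.mem_product] at hF
    obtain ⟨⟨F1, F1'⟩, ⟨hm1, hm2⟩, rfl⟩ := hF
    exact isFort_prod (h1 _ hm1) (h1' _ hm2)
  have hdisj : (↑D : Set (Finset (V × V'))).Pairwise Disjoint := by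
    intro A hA B hB hAB
    simp only [hD, Finset.coe_image, Set.mem_image, Finset.mem_coe,
      Finset.mem_product] at hA hB
    obtain ⟨⟨F1, F1'⟩, ⟨hm1, hm1'⟩, rfl⟩ := hA
    obtain ⟨⟨F2, F2'⟩, ⟨hm2, hm2'⟩, rfl⟩ := hB
    have hne : F1 ≠ F2 ∨ F1' ≠ F2' := by
      by_contra h
      push_neg at h
      exact hAB (by rw [h.1, h.2])
    rw [Finset.disjoint_left]
    rintro ⟨a, b⟩ hx hy
    rw [Finset.mem_product] at hx hy
    rcases hne with h | h
    · have := h2 (Finset.mem_coe.mpr hm1) (Finset.mem_coe.mpr hm2) h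
      exact Finset.disjoint_left.mp this hx.1 hy.1
    · have := h2' (Finset.mem_coe.mpr hm1') (Finset.mem_coe.mpr hm2') h
      exact Finset.disjoint_left.mp this hx.2 hy.2
  rw [← hcard]
  exact le_csSup (fortSet_bdd (G □ G')) ⟨D, hforts, hdisj, rfl⟩
end

section
/- Let m ≥ 2 and let G_m = K_{2m} □ K_{2m} be the Cartesian product of two complete graphs on 2m vertices. Then every fort of G_m has cardinality at least 4, and ft(G_m) = m² = ft(K_{2m}) · ft(K_{2m}). -/
open Finset

section Aux

variable {V : Type*}

lemma top_adj' {a b : V} (h : a ≠ b) : (⊤ : SimpleGraph V).Adj a b := h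

/-- In a complete graph, any set containing two distinct vertices is a fort. -/
lemma fort_of_pair {F : Finset V} {a b : V} (ha : a ∈ F) (hb : b ∈ F)
    (hab : a ≠ b) : IsFort (⊤ : SimpleGraph V) F := by
  refine ⟨⟨a, ha⟩, fun v hv h => ?_⟩
  obtain ⟨u, -, huniq⟩ := h
  have h1 : a = u := huniq a ⟨ha, top_adj' fun h => hv (h ▸ ha)⟩
  have h2 : b = u := huniq b ⟨hb, top_adj' fun h => hv (h ▸ hb)⟩
  exact hab (h1.trans h2.symm)

/-- In a complete graph on at least two vertices, every fort has at least two vertices. -/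
lemma fort_top_card [Fintype V] (h1 : 1 < Fintype.card V)
    {F : Finset V} (hF : IsFort (⊤ : SimpleGraph V) F) : 2 ≤ F.card := by
  by_contra h
  push_neg at h
  have hc : F.card = 1 := le_antisymm (by omega) hF.1.card_pos
  obtain ⟨u, rfl⟩ := Finset.card_eq_one.mp hc
  obtain ⟨v, hvu⟩ := Fintype.exists_ne_of_one_lt_card h1 u
  exact hF.2 v (by simp [hvu]) ⟨u, ⟨Finset.mem_singleton_self u, top_adj' hvu⟩,
    fun y hy => Finset.mem_singleton.mp hy.1⟩

/-- A pairwise disjoint collection of sets of size at least `k` has at most `|V|/k` members. -/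
lemma card_coll_le [Fintype V] [DecidableEq V] (k : ℕ)
    (𝒞 : Finset (Finset V)) (hdisj : (↑𝒞 : Set (Finset V)).Pairwise Disjoint)
    (hk : ∀ F ∈ 𝒞, k ≤ F.card) : k * 𝒞.card ≤ Fintype.card V := by
  calc k * 𝒞.card = ∑ _F ∈ 𝒞, k := by rw [Finset.sum_const, smul_eq_mul, mul_comm]
    _ ≤ ∑ F ∈ 𝒞, F.card := Finset.sum_le_sum hk
    _ = (𝒞.biUnion id).card :=
        (Finset.card_biUnion fun x hx y hy hxy => hdisj hx hy hxy).symm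
    _ ≤ Fintype.card V := le_trans (Finset.card_le_univ _) (le_of_eq Finset.card_univ)

/-- Every fort of `K_n □ K_n` with `n ≥ 4` has at least four vertices. -/
lemma fort_box_card {n : ℕ} (hn : 4 ≤ n) {F : Finset (Fin n × Fin n)}
    (hF : IsFort ((⊤ : SimpleGraph (Fin n)) □ (⊤ : SimpleGraph (Fin n))) F) : 4 ≤ F.card := by
  classical
  by_contra hcard
  push_neg at hcard
  have hc3 : F.card ≤ 3 := by omega
  obtain ⟨hne, hfort⟩ := hF
  have himg : ∀ g : Fin n × Fin n → Fin n, ∃ y : Fin n, y ∉ F.image g := by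
    intro g
    by_contra hall
    push_neg at hall
    have h0 : (F.image g) = Finset.univ := Finset.eq_univ_iff_forall.mpr hall
    have h1 : (F.image g).card = n := by rw [h0]; simp
    have h2 : (F.image g).card ≤ F.card := Finset.card_image_le
    omega
  have key : ∃ p ∈ F, (∀ q ∈ F, q.1 = p.1 → q = p) ∨ (∀ q ∈ F, q.2 = p.2 → q = p) := by
    by_contra hk
    push_neg at hk
    have hrow : ∀ r ∈ F.image Prod.fst, 2 ≤ (F.filter fun a => a.1 = r).card := by
      intro r hr
      obtain ⟨p, hp, rfl⟩ := Finset.mem_image.mp hr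
      obtain ⟨⟨q, hq, hq1, hqp⟩, -⟩ := hk p hp
      exact Finset.one_lt_card_iff.mpr ⟨p, q, by simp [hp], by simp [hq, hq1],
        fun h => hqp h.symm⟩
    have hcol : ∀ c ∈ F.image Prod.snd, 2 ≤ (F.filter fun a => a.2 = c).card := by
      intro c hc
      obtain ⟨p, hp, rfl⟩ := Finset.mem_image.mp hc
      obtain ⟨-, ⟨q, hq, hq2, hqp⟩⟩ := hk p hp
      exact Finset.one_lt_card_iff.mpr ⟨p, q, by simp [hp], by simp [hq, hq2],
        fun h => hqp h.symm⟩
    have hsumR : F.card = ∑ r ∈ F.image Prod.fst, (F.filter fun a => a.1 = r).card :=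
      Finset.card_eq_sum_card_image Prod.fst F
    have hsumC : F.card = ∑ c ∈ F.image Prod.snd, (F.filter fun a => a.2 = c).card :=
      Finset.card_eq_sum_card_image Prod.snd F
    have hR : 2 * (F.image Prod.fst).card ≤ F.card := by
      rw [hsumR]
      calc 2 * (F.image Prod.fst).card = ∑ _r ∈ F.image Prod.fst, 2 := by
            rw [Finset.sum_const, smul_eq_mul, mul_comm]
        _ ≤ _ := Finset.sum_le_sum hrow
    have hC : 2 * (F.image Prod.snd).card ≤ F.card := by
      rw [hsumC]
      calc 2 * (F.image Prod.snd).card = ∑ _c ∈ F.image Prod.snd, 2 := by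
            rw [Finset.sum_const, smul_eq_mul, mul_comm]
        _ ≤ _ := Finset.sum_le_sum hcol
    have hsub : F ⊆ (F.image Prod.fst) ×ˢ (F.image Prod.snd) := fun p hp =>
      Finset.mem_product.mpr ⟨Finset.mem_image_of_mem _ hp, Finset.mem_image_of_mem _ hp⟩
    have hle : F.card ≤ (F.image Prod.fst).card * (F.image Prod.snd).card := by
      have := Finset.card_le_card hsub
      rwa [Finset.card_product] at this
    have h1 : F.card = 1 := by nlinarith [hne.card_pos]
    obtain ⟨p, rfl⟩ := Finset.card_eq_one.mp h1
    obtain ⟨⟨q, hq, -, hqp⟩, -⟩ := hk p (Finset.mem_singleton_self p)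
    exact hqp (Finset.mem_singleton.mp hq)
  obtain ⟨p, hp, hcase⟩ := key
  rcases hcase with hrow | hcol
  · obtain ⟨y, hy⟩ := himg Prod.snd
    have hv : (p.1, y) ∉ F := fun h => hy (Finset.mem_image_of_mem Prod.snd h)
    refine hfort (p.1, y) hv ⟨p, ⟨hp, ?_⟩, ?_⟩
    · exact Or.inr ⟨top_adj' fun h => hy (by rw [show y = p.2 from h]; exact Finset.mem_image_of_mem Prod.snd hp), rfl⟩
    · rintro u ⟨huF, hadj⟩
      rcases SimpleGraph.boxProd_adj.mp hadj with ⟨-, h2⟩ | ⟨-, h1⟩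
      · exact absurd ((show y = u.2 from h2) ▸ Finset.mem_image_of_mem Prod.snd huF) hy
      · exact hrow u huF h1.symm
  · obtain ⟨x, hx⟩ := himg Prod.fst
    have hv : (x, p.2) ∉ F := fun h => hx (Finset.mem_image_of_mem Prod.fst h)
    refine hfort (x, p.2) hv ⟨p, ⟨hp, ?_⟩, ?_⟩
    · exact Or.inl ⟨top_adj' fun h => hx (by rw [show x = p.1 from h]; exact Finset.mem_image_of_mem Prod.fst hp), rfl⟩
    · rintro u ⟨huF, hadj⟩
      rcases SimpleGraph.boxProd_adj.mp hadj with ⟨-, h2⟩ | ⟨-, h1⟩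
      · exact hcol u huF h2.symm
      · exact absurd ((show x = u.1 from h1) ▸ Finset.mem_image_of_mem Prod.fst huF) hx

/-- The "half" index map `Fin (2m) → Fin m`. -/
def halfIdx {m : ℕ} (v : Fin (2 * m)) : Fin m := ⟨v.val / 2, by have := v.isLt; omega⟩

def dbl0 {m : ℕ} (i : Fin m) : Fin (2 * m) := ⟨2 * i.val, by have := i.isLt; omega⟩

def dbl1 {m : ℕ} (i : Fin m) : Fin (2 * m) := ⟨2 * i.val + 1, by have := i.isLt; omega⟩

lemma halfIdx_dbl0 {m : ℕ} (i : Fin m) : halfIdx (dbl0 i) = i := by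
  apply Fin.ext; simp only [halfIdx, dbl0]; omega

lemma halfIdx_dbl1 {m : ℕ} (i : Fin m) : halfIdx (dbl1 i) = i := by
  apply Fin.ext; simp only [halfIdx, dbl1]; omega

lemma dbl0_ne_dbl1 {m : ℕ} (i : Fin m) : dbl0 i ≠ dbl1 i := by
  simp only [dbl0, dbl1, ne_eq, Fin.mk.injEq]; omega

end Aux

/-- The fort number of `K_{2m}` is `m`. -/
lemma fortNumber_top_eq (m : ℕ) (hm : 1 ≤ m) :
    fortNumber (⊤ : SimpleGraph (Fin (2 * m))) = m := by
  classical
  set S := {k | ∃ 𝒞 : Finset (Finset (Fin (2 * m))),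
    (∀ F ∈ 𝒞, IsFort (⊤ : SimpleGraph (Fin (2 * m))) F) ∧
    (↑𝒞 : Set (Finset (Fin (2 * m)))).Pairwise Disjoint ∧ 𝒞.card = k} with hS
  have hub : ∀ k ∈ S, k ≤ m := by
    rintro k ⟨𝒞, hforts, hdisj, rfl⟩
    have h2 : ∀ F ∈ 𝒞, 2 ≤ F.card := fun F hF =>
      fort_top_card (by simp only [Fintype.card_fin]; omega) (hforts F hF)
    have := card_coll_le 2 𝒞 hdisj h2
    rw [Fintype.card_fin] at this
    omega
  have hmem : m ∈ S := by
    refine ⟨Finset.univ.image (fun i : Fin m =>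
      Finset.univ.filter fun v : Fin (2 * m) => halfIdx v = i), ?_, ?_, ?_⟩
    · intro F hF
      obtain ⟨i, -, rfl⟩ := Finset.mem_image.mp hF
      exact fort_of_pair (by simp [halfIdx_dbl0]) (by simp [halfIdx_dbl1]) (dbl0_ne_dbl1 i)
    · intro A hA B hB hAB
      obtain ⟨i, -, rfl⟩ := Finset.mem_image.mp hA
      obtain ⟨j, -, rfl⟩ := Finset.mem_image.mp hB
      rw [Finset.disjoint_left]
      intro v hvi hvj
      simp only [Finset.mem_filter] at hvi hvj
      exact hAB (by rw [hvi.2.symm.trans hvj.2])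
    · rw [Finset.card_image_of_injective _ ?_, Finset.card_univ, Fintype.card_fin]
      intro i j hij
      have h0 : dbl0 i ∈ (fun i : Fin m =>
          Finset.univ.filter fun v : Fin (2 * m) => halfIdx v = i) i := by
        simp [halfIdx_dbl0]
      rw [hij] at h0
      simpa [halfIdx_dbl0] using (Finset.mem_filter.mp h0).2
  exact le_antisymm (csSup_le ⟨m, hmem⟩ hub) (le_csSup ⟨m, hub⟩ hmem)

/-- for `m ≥ 2` and `G_m = K_{2m} □ K_{2m}`, every fort of `G_m` has at least
four vertices, and `ft(G_m) = m² = ft(K_{2m}) · ft(K_{2m})`. -/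
theorem boxProd_complete_fortNumber (m : ℕ) (hm : 2 ≤ m) :
    (∀ F : Finset (Fin (2 * m) × Fin (2 * m)),
        IsFort ((⊤ : SimpleGraph (Fin (2 * m))) □ (⊤ : SimpleGraph (Fin (2 * m)))) F →
        4 ≤ F.card) ∧
    fortNumber ((⊤ : SimpleGraph (Fin (2 * m))) □ (⊤ : SimpleGraph (Fin (2 * m)))) = m ^ 2 ∧
    m ^ 2 = fortNumber (⊤ : SimpleGraph (Fin (2 * m))) *
      fortNumber (⊤ : SimpleGraph (Fin (2 * m))) := by
  classical
  have hn : 4 ≤ 2 * m := by omega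
  have hsize : ∀ F : Finset (Fin (2 * m) × Fin (2 * m)),
      IsFort ((⊤ : SimpleGraph (Fin (2 * m))) □ (⊤ : SimpleGraph (Fin (2 * m)))) F →
      4 ≤ F.card := fun F hF => fort_box_card hn hF
  refine ⟨hsize, ?_, ?_⟩
  · set G := (⊤ : SimpleGraph (Fin (2 * m))) □ (⊤ : SimpleGraph (Fin (2 * m))) with hG
    set S := {k | ∃ 𝒞 : Finset (Finset (Fin (2 * m) × Fin (2 * m))),
      (∀ F ∈ 𝒞, IsFort G F) ∧
      (↑𝒞 : Set (Finset (Fin (2 * m) × Fin (2 * m)))).Pairwise Disjoint ∧ 𝒞.card = k} with hS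
    have hub : ∀ k ∈ S, k ≤ m ^ 2 := by
      rintro k ⟨𝒞, hforts, hdisj, rfl⟩
      have h4 : ∀ F ∈ 𝒞, 4 ≤ F.card := fun F hF => hsize F (hforts F hF)
      have := card_coll_le 4 𝒞 hdisj h4
      rw [Fintype.card_prod, Fintype.card_fin] at this
      nlinarith
    have hmem : m ^ 2 ∈ S := by
      refine ⟨Finset.univ.image (fun ij : Fin m × Fin m =>
        Finset.univ.filter fun p : Fin (2 * m) × Fin (2 * m) =>
          halfIdx p.1 = ij.1 ∧ halfIdx p.2 = ij.2), ?_, ?_, ?_⟩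
      · intro F hF
        obtain ⟨⟨i, j⟩, -, rfl⟩ := Finset.mem_image.mp hF
        constructor
        · exact ⟨(dbl0 i, dbl0 j), by simp [halfIdx_dbl0]⟩
        · intro v hv hex
          obtain ⟨u, ⟨huF, huadj⟩, huniq⟩ := hex
          simp only [Finset.mem_filter, Finset.mem_univ, true_and] at hv huF
          by_cases hi : halfIdx v.1 = i
          · by_cases hj : halfIdx v.2 = j
            · exact hv ⟨hi, hj⟩
            · have hmem0 : (v.1, dbl0 j) ∈ Finset.univ.filter fun p : Fin (2 * m) × Fin (2 * m) =>
                  halfIdx p.1 = i ∧ halfIdx p.2 = j := by simp [hi, halfIdx_dbl0]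
              have hmem1 : (v.1, dbl1 j) ∈ Finset.univ.filter fun p : Fin (2 * m) × Fin (2 * m) =>
                  halfIdx p.1 = i ∧ halfIdx p.2 = j := by simp [hi, halfIdx_dbl1]
              have hadj0 : G.Adj v (v.1, dbl0 j) :=
                Or.inr ⟨top_adj' fun h => hj (by rw [show v.2 = dbl0 j from h, halfIdx_dbl0]), rfl⟩
              have hadj1 : G.Adj v (v.1, dbl1 j) :=
                Or.inr ⟨top_adj' fun h => hj (by rw [show v.2 = dbl1 j from h, halfIdx_dbl1]), rfl⟩
              have e0 := huniq (v.1, dbl0 j) ⟨hmem0, hadj0⟩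
              have e1 := huniq (v.1, dbl1 j) ⟨hmem1, hadj1⟩
              have : dbl0 j = dbl1 j := congrArg Prod.snd (e0.trans e1.symm)
              exact dbl0_ne_dbl1 j this
          · by_cases hj : halfIdx v.2 = j
            · have hmem0 : (dbl0 i, v.2) ∈ Finset.univ.filter fun p : Fin (2 * m) × Fin (2 * m) =>
                  halfIdx p.1 = i ∧ halfIdx p.2 = j := by simp [hj, halfIdx_dbl0]
              have hmem1 : (dbl1 i, v.2) ∈ Finset.univ.filter fun p : Fin (2 * m) × Fin (2 * m) =>
                  halfIdx p.1 = i ∧ halfIdx p.2 = j := by simp [hj, halfIdx_dbl1]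
              have hadj0 : G.Adj v (dbl0 i, v.2) :=
                Or.inl ⟨top_adj' fun h => hi (by rw [show v.1 = dbl0 i from h, halfIdx_dbl0]), rfl⟩
              have hadj1 : G.Adj v (dbl1 i, v.2) :=
                Or.inl ⟨top_adj' fun h => hi (by rw [show v.1 = dbl1 i from h, halfIdx_dbl1]), rfl⟩
              have e0 := huniq (dbl0 i, v.2) ⟨hmem0, hadj0⟩
              have e1 := huniq (dbl1 i, v.2) ⟨hmem1, hadj1⟩
              have : dbl0 i = dbl1 i := congrArg Prod.fst (e0.trans e1.symm)
              exact dbl0_ne_dbl1 i this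
            · rcases SimpleGraph.boxProd_adj.mp huadj with ⟨-, h2⟩ | ⟨-, h1⟩
              · exact hj (by rw [show v.2 = u.2 from h2]; exact huF.2)
              · exact hi (by rw [show v.1 = u.1 from h1]; exact huF.1)
      · intro A hA B hB hAB
        obtain ⟨ij, -, rfl⟩ := Finset.mem_image.mp hA
        obtain ⟨ij', -, rfl⟩ := Finset.mem_image.mp hB
        rw [Finset.disjoint_left]
        intro v hvi hvj
        simp only [Finset.mem_filter] at hvi hvj
        refine hAB ?_
        have h1 : ij.1 = ij'.1 := hvi.2.1.symm.trans hvj.2.1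
        have h2 : ij.2 = ij'.2 := hvi.2.2.symm.trans hvj.2.2
        rw [Prod.ext h1 h2]
      · rw [Finset.card_image_of_injective _ ?_, Finset.card_univ, Fintype.card_prod,
          Fintype.card_fin, sq]
        intro ij ij' hij
        have h0 : (dbl0 ij.1, dbl0 ij.2) ∈ (fun ij : Fin m × Fin m =>
            Finset.univ.filter fun p : Fin (2 * m) × Fin (2 * m) =>
              halfIdx p.1 = ij.1 ∧ halfIdx p.2 = ij.2) ij := by
          simp [halfIdx_dbl0]
        rw [hij] at h0
        simp only [Finset.mem_filter, halfIdx_dbl0] at h0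
        exact Prod.ext h0.2.1 h0.2.2
    exact le_antisymm (csSup_le ⟨m ^ 2, hmem⟩ hub) (le_csSup ⟨m ^ 2, hub⟩ hmem)
  · rw [fortNumber_top_eq m (by omega), sq]
end

section
/- Let G and G' be finite simple graphs with nonempty vertex sets. Then Z*(G) · Z*(G') ≤ Z*(G □ G'). -/
open Finset

/-- The whole vertex set is always a fort. -/
lemma isFort_univ {V : Type*} [Fintype V] [Nonempty V] (G : SimpleGraph V) :
    IsFort G (univ : Finset V) :=
  ⟨univ_nonempty, fun v hv => absurd (mem_univ v) hv⟩

/-- The feasible set for `fracZ` is nonempty. -/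
lemma fracZ_set_nonempty {V : Type*} [Fintype V] (G : SimpleGraph V) :
    {x : ℝ | ∃ ω : V → ℝ, (∀ v, 0 ≤ ω v) ∧
      (∀ F : Finset V, IsFort G F → 1 ≤ ∑ v ∈ F, ω v) ∧ x = ∑ v, ω v}.Nonempty := by
  refine ⟨(Fintype.card V : ℝ), fun _ => 1, fun _ => zero_le_one, fun F hF => ?_, by simp⟩
  have : (1 : ℝ) ≤ (F.card : ℝ) := by
    exact_mod_cast Nat.one_le_iff_ne_zero.mpr (Finset.card_ne_zero_of_mem hF.1.choose_spec)
  simpa using this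

/-- The feasible set for `fracZ` is bounded below. -/
lemma fracZ_set_bddBelow {V : Type*} [Fintype V] (G : SimpleGraph V) :
    BddBelow {x : ℝ | ∃ ω : V → ℝ, (∀ v, 0 ≤ ω v) ∧
      (∀ F : Finset V, IsFort G F → 1 ≤ ∑ v ∈ F, ω v) ∧ x = ∑ v, ω v} := by
  refine ⟨0, fun x hx => ?_⟩
  obtain ⟨ω, hnn, _, rfl⟩ := hx
  exact Finset.sum_nonneg fun v _ => hnn v

lemma fracZ_le {V : Type*} [Fintype V] (G : SimpleGraph V) (ω : V → ℝ)
    (hnn : ∀ v, 0 ≤ ω v) (hfort : ∀ F : Finset V, IsFort G F → 1 ≤ ∑ v ∈ F, ω v) :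
    fracZ G ≤ ∑ v, ω v :=
  csInf_le (fracZ_set_bddBelow G) ⟨ω, hnn, hfort, rfl⟩

lemma one_le_fracZ {V : Type*} [Fintype V] [Nonempty V] (G : SimpleGraph V) :
    1 ≤ fracZ G := by
  refine le_csInf (fracZ_set_nonempty G) ?_
  rintro x ⟨ω, hnn, hfort, rfl⟩
  simpa using hfort univ (isFort_univ G)

/-- The product of forts is a fort of the box product. -/
lemma isFort_boxProd {V V' : Type*} (G : SimpleGraph V) (G' : SimpleGraph V')
    {F : Finset V} {F' : Finset V'} (hF : IsFort G F) (hF' : IsFort G' F') :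
    IsFort (G □ G') (F ×ˢ F') := by
  refine ⟨hF.1.product hF'.1, ?_⟩
  rintro ⟨v, v'⟩ hv ⟨⟨a, b⟩, ⟨hab, hadj⟩, huniq⟩
  rw [Finset.mem_product] at hab
  rw [SimpleGraph.boxProd_adj] at hadj
  rw [Finset.mem_product, not_and_or] at hv
  rcases hv with hv | hv'
  · -- v ∉ F
    rcases hadj with ⟨hadjG, hb⟩ | ⟨hadjG', ha⟩
    · -- b = v' : witness (a, v') gives a unique G-neighbor of v in F
      subst hb
      refine hF.2 v hv ⟨a, ⟨hab.1, hadjG⟩, ?_⟩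
      intro c ⟨hc, hcadj⟩
      have := huniq (c, v') ⟨Finset.mem_product.mpr ⟨hc, hab.2⟩,
        SimpleGraph.boxProd_adj.mpr (Or.inl ⟨hcadj, rfl⟩)⟩
      exact congrArg Prod.fst this
    · exact hv (ha ▸ hab.1)
  · -- v' ∉ F'
    rcases hadj with ⟨hadjG, hb⟩ | ⟨hadjG', ha⟩
    · exact hv' (hb ▸ hab.2)
    · subst ha
      refine hF'.2 v' hv' ⟨b, ⟨hab.2, hadjG'⟩, ?_⟩
      intro c ⟨hc, hcadj⟩
      have := huniq (v, c) ⟨Finset.mem_product.mpr ⟨hab.1, hc⟩,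
        SimpleGraph.boxProd_adj.mpr (Or.inr ⟨hcadj, rfl⟩)⟩
      exact congrArg Prod.snd this

/-- `Z*(G) · Z*(G') ≤ Z*(G □ G')`. -/
theorem fracZ_mul_fracZ_le_fracZ_boxProd {V V' : Type*} [Fintype V] [Fintype V']
    [Nonempty V] [Nonempty V'] (G : SimpleGraph V) (G' : SimpleGraph V') :
    fracZ G * fracZ G' ≤ fracZ (G □ G') := by
  have hZ1 : (1 : ℝ) ≤ fracZ G := one_le_fracZ G
  have hZ0 : (0 : ℝ) < fracZ G := lt_of_lt_of_le one_pos hZ1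
  refine le_csInf (fracZ_set_nonempty (G □ G')) ?_
  rintro x ⟨ω, hnn, hfort, rfl⟩
  -- Step A: for every fort F' of G', Z*(G) ≤ ∑_{u' ∈ F'} ∑_u ω (u, u')
  have stepA : ∀ F' : Finset V', IsFort G' F' →
      fracZ G ≤ ∑ u' ∈ F', ∑ u, ω (u, u') := by
    intro F' hF'
    have h := fracZ_le G (fun u => ∑ u' ∈ F', ω (u, u'))
      (fun u => Finset.sum_nonneg fun _ _ => hnn _)
      (fun F hF => by
        have := hfort (F ×ˢ F') (isFort_boxProd G G' hF hF')
        rwa [Finset.sum_product] at this)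
    calc fracZ G ≤ ∑ u, ∑ u' ∈ F', ω (u, u') := h
      _ = ∑ u' ∈ F', ∑ u, ω (u, u') := Finset.sum_comm
  -- Step B: ω' u' = (∑_u ω (u, u')) / Z*(G) is feasible for G'
  have stepB : fracZ G' ≤ ∑ u', (∑ u, ω (u, u')) / fracZ G := by
    refine fracZ_le G' (fun u' => (∑ u, ω (u, u')) / fracZ G)
      (fun u' => div_nonneg (Finset.sum_nonneg fun _ _ => hnn _) hZ0.le)
      (fun F' hF' => ?_)
    rw [← Finset.sum_div, one_le_div hZ0]
    exact stepA F' hF'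
  have hx : ∑ u', (∑ u, ω (u, u')) / fracZ G = (∑ p, ω p) / fracZ G := by
    rw [← Finset.sum_div, Finset.sum_comm, Fintype.sum_prod_type]
  rw [hx, le_div_iff₀ hZ0] at stepB
  calc fracZ G * fracZ G' = fracZ G' * fracZ G := mul_comm _ _
    _ ≤ ∑ p, ω p := stepB
end

section
/- Let G be a simple graph with vertex set {1,…,n} and let F₁,…,F_k (1 ≤ k ≤ n) be pairwise disjoint forts of G, with incidence vectors v₁,…,v_k ∈ ℝⁿ (where the j-th entry of v_i is 1 if j ∈ F_i and 0 otherwise). Then there exists a real n×n matrix A such that for all i ≠ j, the (i,j) entry of A is nonzero if and only if {i,j} is an edge of G, and A v_i = 0 for i = 1,…,k. In particular, there is such a matrix A whose nullity is at least k, so the maximum nullity over all combinatorially symmetric real matrices whose graph is G is at least ft(G). -/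
open Finset

/-!
Each row of `A` can be chosen on its own: row `v` must vanish off the closed neighbourhood of `v`,
be nonzero at the neighbours of `v`, and sum to zero over each fort. As the forts are disjoint,
these are constraints on disjoint blocks of entries. A fort avoiding `v` meets the neighbourhood
of `v` in zero or at least two vertices, and a block of size other than one carries nonzero
weights with zero sum; in the fort containing `v` the diagonal entry, which may vanish, does the
balancing. Incidence vectors of disjoint nonempty sets are linearly independent, which bounds the
nullity, and a maximum family of disjoint forts then bounds `ft(G)` by the maximum nullity.
-/

open Function

theorem exists_ne_zero_off_sum_eq_zero {α R : Type*} [Ring R] [CharZero R]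
    (s : Finset α) (a : α) (hs : #s = 1 → a ∈ s) :
    ∃ w : α → R, (∀ j, j ≠ a → w j ≠ 0) ∧ ∑ j ∈ s, w j = 0 := by
  classical
  rcases s.eq_empty_or_nonempty with rfl | ⟨b, hb⟩
  · exact ⟨1, fun _ _ => one_ne_zero, by simp⟩
  -- The balancing entry `1 - #s` sits at `a` whenever possible, since only there may it vanish.
  obtain ⟨c, hc, hca⟩ : ∃ c ∈ s, c ≠ a → #s ≠ 1 := by
    by_cases ha : a ∈ s
    · exact ⟨a, ha, fun h => (h rfl).elim⟩
    · exact ⟨b, hb, fun _ h => ha (hs h)⟩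
  refine ⟨fun j => if j = c then 1 - #s else 1, fun j hj => ?_, ?_⟩
  · dsimp only
    split_ifs with hjc
    · exact sub_ne_zero.2 (by exact_mod_cast (hca (hjc ▸ hj)).symm)
    · exact one_ne_zero
  · rw [← add_sum_erase _ _ hc, if_pos rfl,
      sum_congr rfl fun j hj => if_neg (ne_of_mem_erase hj), sum_const, card_erase_of_mem hc,
      nsmul_one, Nat.cast_pred (card_pos.2 ⟨c, hc⟩)]
    abel

theorem exists_ne_zero_off_sum_eq_zero_of_pairwise_disjoint {ι α R : Type*} [Ring R]
    [CharZero R] (B : ι → Finset α) (hB : Pairwise (Disjoint on B)) (a : α)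
    (hs : ∀ l, #(B l) = 1 → a ∈ B l) :
    ∃ w : α → R, (∀ j, j ≠ a → w j ≠ 0) ∧ ∀ l, ∑ j ∈ B l, w j = 0 := by
  classical
  choose w hw hsum using fun l => exists_ne_zero_off_sum_eq_zero (R := R) (B l) a (hs l)
  have hblock {j l} (hj : j ∈ B l) (h : ∃ l, j ∈ B l) : h.choose = l := by
    by_contra hne
    exact disjoint_left.1 (hB hne) h.choose_spec hj
  refine ⟨fun j => if h : ∃ l, j ∈ B l then w h.choose j else 1, fun j hj => ?_, fun l => ?_⟩
  · dsimp only
    split_ifs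
    exacts [hw _ j hj, one_ne_zero]
  · rw [← hsum l]
    exact sum_congr rfl fun j hj => by simp only [hblock hj, dif_pos (⟨l, hj⟩ : ∃ l, j ∈ B l)]

theorem IsFort.card_filter_adj_ne_one {V : Type*} {G : SimpleGraph V} [DecidableRel G.Adj]
    {F : Finset V} (hF : IsFort G F) {v : V} (hv : v ∉ F) : #(F.filter (G.Adj v)) ≠ 1 := by
  intro h
  obtain ⟨u, hu⟩ := card_eq_one.1 h
  have hmem (y : V) : y ∈ F ∧ G.Adj v y ↔ y = u := by
    rw [← mem_singleton, ← hu, mem_filter]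
  exact hF.2 v hv ⟨u, (hmem u).2 rfl, fun y hy => (hmem y).1 hy⟩

theorem exists_row_adj_pattern_sum_fort_eq_zero {V ι R : Type*} [Ring R] [CharZero R]
    {G : SimpleGraph V} {F : ι → Finset V} (hfort : ∀ l, IsFort G (F l))
    (hdisj : Pairwise (Disjoint on F)) (v : V) :
    ∃ r : V → R, (∀ j, j ≠ v → (r j ≠ 0 ↔ G.Adj v j)) ∧ ∀ l, ∑ j ∈ F l, r j = 0 := by
  classical
  let B l := (F l).filter fun j => j = v ∨ G.Adj v j
  have hB : Pairwise (Disjoint on B) := fun l m hlm =>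
    (hdisj hlm).mono (filter_subset _ _) (filter_subset _ _)
  have hs (l) : #(B l) = 1 → v ∈ B l := by
    by_cases hv : v ∈ F l
    · exact fun _ => mem_filter.2 ⟨hv, Or.inl rfl⟩
    · have hBl : B l = (F l).filter (G.Adj v) :=
        filter_congr fun j hj => or_iff_right (ne_of_mem_of_not_mem hj hv)
      exact fun h => ((hfort l).card_filter_adj_ne_one hv (hBl ▸ h)).elim
  obtain ⟨w, hw, hsum⟩ := exists_ne_zero_off_sum_eq_zero_of_pairwise_disjoint (R := R) B hB v hs
  refine ⟨fun j => if j = v ∨ G.Adj v j then w j else 0, fun j hj => ?_, fun l => ?_⟩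
  · by_cases hadj : G.Adj v j <;> simp [hj, hadj, hw j hj]
  · rw [← sum_filter]
    exact hsum l

theorem exists_matrix_adj_pattern_mulVec_fort_indicator_eq_zero {V ι R : Type*} [Fintype V]
    [DecidableEq V] [Ring R] [CharZero R] (G : SimpleGraph V) (F : ι → Finset V)
    (hfort : ∀ l, IsFort G (F l)) (hdisj : Pairwise (Disjoint on F)) :
    ∃ A : Matrix V V R, (∀ i j, i ≠ j → (A i j ≠ 0 ↔ G.Adj i j)) ∧
      ∀ l, A.mulVec (fun j => if j ∈ F l then (1 : R) else 0) = 0 := by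
  choose A hpat hsum using exists_row_adj_pattern_sum_fort_eq_zero (R := R) hfort hdisj
  refine ⟨Matrix.of A, fun i j hij => hpat i j hij.symm, fun l => funext fun v => ?_⟩
  simp [Matrix.mulVec, dotProduct, hsum]

theorem linearIndependent_indicator_of_pairwise_disjoint {V ι K : Type*} [DecidableEq V]
    [Field K] (F : ι → Finset V) (hne : ∀ l, (F l).Nonempty) (hdisj : Pairwise (Disjoint on F)) :
    LinearIndependent K fun l (j : V) => if j ∈ F l then (1 : K) else 0 := by
  rw [linearIndependent_iff']
  intro s g hg i hi
  obtain ⟨u, hu⟩ := hne i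
  have hgu := congrFun hg u
  simp only [Finset.sum_apply, Pi.smul_apply, smul_eq_mul, mul_ite, mul_one, mul_zero,
    Pi.zero_apply] at hgu
  rwa [sum_eq_single_of_mem i hi fun l _ hli =>
    if_neg fun hul => disjoint_left.1 (hdisj hli) hul hu, if_pos hu] at hgu

theorem card_le_finrank_ker_of_mulVec_indicator_eq_zero {V ι K : Type*} [Fintype V]
    [DecidableEq V] [Fintype ι] [Field K] (A : Matrix V V K) (F : ι → Finset V)
    (hne : ∀ l, (F l).Nonempty) (hdisj : Pairwise (Disjoint on F))
    (hA : ∀ l, A.mulVec (fun j => if j ∈ F l then (1 : K) else 0) = 0) :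
    Fintype.card ι ≤ Module.finrank K (LinearMap.ker A.mulVecLin) := by
  rw [← finrank_span_eq_card
    (linearIndependent_indicator_of_pairwise_disjoint (K := K) F hne hdisj)]
  exact Submodule.finrank_mono (Submodule.span_le.2 (Set.range_subset_iff.2 hA))

theorem exists_matrix_adj_pattern_card_le_finrank_ker {V ι K : Type*} [Fintype V]
    [DecidableEq V] [Fintype ι] [Field K] [CharZero K] (G : SimpleGraph V) (F : ι → Finset V)
    (hfort : ∀ l, IsFort G (F l)) (hdisj : Pairwise (Disjoint on F)) :
    ∃ A : Matrix V V K, (∀ i j, i ≠ j → (A i j ≠ 0 ↔ G.Adj i j)) ∧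
      (∀ l, A.mulVec (fun j => if j ∈ F l then (1 : K) else 0) = 0) ∧
      Fintype.card ι ≤ Module.finrank K (LinearMap.ker A.mulVecLin) := by
  obtain ⟨A, hpat, hA⟩ :=
    exists_matrix_adj_pattern_mulVec_fort_indicator_eq_zero (R := K) G F hfort hdisj
  exact ⟨A, hpat, hA,
    card_le_finrank_ker_of_mulVec_indicator_eq_zero A F (fun l => (hfort l).1) hdisj hA⟩

theorem exists_disjoint_forts_card_eq_fortNumber {V : Type*} [Fintype V] (G : SimpleGraph V) :
    ∃ 𝒞 : Finset (Finset V), (∀ F ∈ 𝒞, IsFort G F) ∧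
      (↑𝒞 : Set (Finset V)).Pairwise Disjoint ∧ #𝒞 = fortNumber G := by
  classical
  refine Nat.sSup_mem (s := {k | ∃ 𝒞 : Finset (Finset V), (∀ F ∈ 𝒞, IsFort G F) ∧
    (↑𝒞 : Set (Finset V)).Pairwise Disjoint ∧ #𝒞 = k}) ⟨0, ∅, by simp, by simp, rfl⟩
    ⟨Fintype.card V, ?_⟩
  rintro _ ⟨𝒞, hfort, hdisj, rfl⟩
  calc #𝒞 ≤ #(𝒞.biUnion id) := card_le_card_biUnion hdisj fun F hF => (hfort F hF).1
    _ ≤ Fintype.card V := card_le_univ _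

theorem exists_matrix_killing_fort_incidence_vectors_general {n k : ℕ} (G : SimpleGraph (Fin n))
    (F : Fin k → Finset (Fin n))
    (hfort : ∀ i, IsFort G (F i))
    (hdisj : ∀ i j : Fin k, i ≠ j → Disjoint (F i) (F j)) :
    (∃ A : Matrix (Fin n) (Fin n) ℝ,
      (∀ i j : Fin n, i ≠ j → (A i j ≠ 0 ↔ G.Adj i j)) ∧
      (∀ i : Fin k, A.mulVec (fun j => if j ∈ F i then (1 : ℝ) else 0) = 0) ∧
      k ≤ Module.finrank ℝ (LinearMap.ker A.mulVecLin)) ∧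
    fortNumber G ≤ sSup {d | ∃ A : Matrix (Fin n) (Fin n) ℝ,
      (∀ i j : Fin n, i ≠ j → (A i j ≠ 0 ↔ G.Adj i j)) ∧
      d = Module.finrank ℝ (LinearMap.ker A.mulVecLin)} := by
  refine ⟨by simpa using exists_matrix_adj_pattern_card_le_finrank_ker (K := ℝ) G F hfort hdisj,
    ?_⟩
  obtain ⟨𝒞, h𝒞fort, h𝒞disj, h𝒞card⟩ := exists_disjoint_forts_card_eq_fortNumber G
  obtain ⟨A, hpat, -, hA⟩ := exists_matrix_adj_pattern_card_le_finrank_ker (K := ℝ) G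
    ((↑) : 𝒞 → Finset (Fin n)) (fun F => h𝒞fort F F.2)
    fun F F' hne => h𝒞disj F.2 F'.2 (Subtype.coe_injective.ne hne)
  refine le_csSup_of_le ⟨n, ?_⟩ ⟨A, hpat, rfl⟩ (by simpa [h𝒞card] using hA)
  rintro _ ⟨B, -, rfl⟩
  simpa using Submodule.finrank_le (LinearMap.ker B.mulVecLin)

/-- given pairwise disjoint forts `F₁, …, F_k` of a graph `G` on `{1,…,n}`
(`1 ≤ k ≤ n`), there is a real `n × n` matrix `A` whose off-diagonal zero/nonzero pattern
is exactly the adjacency of `G` and which annihilates each incidence vector of the forts;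
in particular such an `A` has nullity at least `k`, and hence the maximum nullity over all
(combinatorially symmetric) matrices whose graph is `G` is at least `ft(G)`. -/
theorem exists_matrix_killing_fort_incidence_vectors {n k : ℕ} (G : SimpleGraph (Fin n))
    (hk1 : 1 ≤ k) (hkn : k ≤ n) (F : Fin k → Finset (Fin n))
    (hfort : ∀ i, IsFort G (F i))
    (hdisj : ∀ i j : Fin k, i ≠ j → Disjoint (F i) (F j)) :
    (∃ A : Matrix (Fin n) (Fin n) ℝ,
      (∀ i j : Fin n, i ≠ j → (A i j ≠ 0 ↔ G.Adj i j)) ∧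
      (∀ i : Fin k, A.mulVec (fun j => if j ∈ F i then (1 : ℝ) else 0) = 0) ∧
      k ≤ Module.finrank ℝ (LinearMap.ker A.mulVecLin)) ∧
    fortNumber G ≤ sSup {d | ∃ A : Matrix (Fin n) (Fin n) ℝ,
      (∀ i j : Fin n, i ≠ j → (A i j ≠ 0 ↔ G.Adj i j)) ∧
      d = Module.finrank ℝ (LinearMap.ker A.mulVecLin)} :=
  exists_matrix_killing_fort_incidence_vectors_general G F hfort hdisj
end
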